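/- arXiv:2411.13884 — 5 statements merged into one kernel-verified Lean document; each statement's English description precedes it below -/
import Mathlib

section
/- Under any controlled-predictor policy, the recursively defined predictor is the true Bayesian predictor: for every time t ≥ 0 and every output history q_{[0,t]} ∈ ℳ^{t+1} with positive probability under the trajectory law, and every x ∈ 𝕏, the conditional pmf of x_{t+1} given q_{[0,t]} equals F(π_t, Q_t, η_t, q_t)(x), where π_0 is the initial pmf and π_{s+1} = F(π_s, Q_s, η_s, q_s); equivalently, for every t, π_t(x) = P(x_t = x | q_{[0,t-1]}) whenever the history q_{[0,t-1]} has positive probability. -/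
open Finset

noncomputable section

variable {X U M : Type}

/-- `π` is a probability mass function on the finite set `X`. -/
def IsPmf [Fintype X] (π : X → ℝ) : Prop :=
  (∀ x, 0 ≤ π x) ∧ ∑ x, π x = 1

/-- Mass that `π` assigns to the cell `Q⁻¹(q)`. -/
def mass [Fintype X] [DecidableEq M] (π : X → ℝ) (Q : X → M) (q : M) : ℝ :=
  ∑ x ∈ Finset.univ.filter (fun x => Q x = q), π x

/-- One-step predictor (Bayesian) update `F(π,Q,η,q)`. -/
def Fupd [Fintype X] [DecidableEq M] (P : X → U → X → ℝ)
    (π : X → ℝ) (Q : X → M) (η : (X → M) → M → U) (q : M) : X → ℝ :=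
  fun x' => (mass π Q q)⁻¹ *
    ∑ x ∈ Finset.univ.filter (fun x => Q x = q), P x (η Q q) x' * π x

/-- Predictor process along a (chronological) list of channel outputs,
under the controlled-predictor policy `(γe, γc)`. -/
def predSeq [Fintype X] [DecidableEq M] (P : X → U → X → ℝ)
    (γe : (X → ℝ) → (X → M)) (γc : (X → ℝ) → ((X → M) → M → U)) :
    (X → ℝ) → List M → (X → ℝ)
  | π, [] => π
  | π, q :: qs => predSeq P γe γc (Fupd P π (γe π) (γc π) q) qs

/-- The predictor `π_s` given output history `qs` (only the first `s` outputs are used). -/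
def predAt [Fintype X] [DecidableEq M] (P : X → U → X → ℝ)
    (γe : (X → ℝ) → (X → M)) (γc : (X → ℝ) → ((X → M) → M → U))
    (π0 : X → ℝ) {n : ℕ} (qs : Fin n → M) (s : ℕ) : X → ℝ :=
  predSeq P γe γc π0 ((List.ofFn qs).take s)

/-- Trajectory law of `(x_{[0,n-1]}, q_{[0,n-1]})` under the controlled-predictor
policy `(γe, γc)` with initial pmf `π0`:
`π0(x_0) ∏_s 1{q_s = Q_s(x_s)} ∏_s P(x_{s+1} | x_s, η_s(Q_s, q_s))`. -/
def law [Fintype X] [Fintype M] [DecidableEq M] (P : X → U → X → ℝ)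
    (γe : (X → ℝ) → (X → M)) (γc : (X → ℝ) → ((X → M) → M → U))
    (π0 : X → ℝ) (n : ℕ) (xs : Fin n → X) (qs : Fin n → M) : ℝ :=
  ∏ s : Fin n,
    ((if (s : ℕ) = 0 then π0 (xs s)
      else
        P (xs ⟨(s : ℕ) - 1, lt_of_le_of_lt (Nat.sub_le _ _) s.isLt⟩)
          (γc (predAt P γe γc π0 qs ((s : ℕ) - 1))
            (γe (predAt P γe γc π0 qs ((s : ℕ) - 1)))
            (qs ⟨(s : ℕ) - 1, lt_of_le_of_lt (Nat.sub_le _ _) s.isLt⟩))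
          (xs s))
      * (if qs s = γe (predAt P γe γc π0 qs (s : ℕ)) (xs s) then 1 else 0))

/-- Probability of the output history `qs` under the trajectory law. -/
def outProb [Fintype X] [Fintype M] [DecidableEq M] (P : X → U → X → ℝ)
    (γe : (X → ℝ) → (X → M)) (γc : (X → ℝ) → ((X → M) → M → U))
    (π0 : X → ℝ) (n : ℕ) (qs : Fin n → M) : ℝ :=
  ∑ xs : Fin n → X, law P γe γc π0 n xs qs


section Aux

set_option linter.unusedSectionVars false
variable [Fintype X] [Fintype M] [DecidableEq X] [DecidableEq M]
variable (P : X → U → X → ℝ) (γe : (X → ℝ) → (X → M)) (γc : (X → ℝ) → ((X → M) → M → U))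

lemma mass_nonneg {π : X → ℝ} (hπ : ∀ x, 0 ≤ π x) (Q : X → M) (q : M) :
    0 ≤ mass π Q q :=
  Finset.sum_nonneg fun y _ => hπ y

lemma Fupd_nonneg (hP : ∀ x u x', 0 ≤ P x u x') {π : X → ℝ} (hπ : ∀ x, 0 ≤ π x)
    (Q : X → M) (η : (X → M) → M → U) (q : M) (x : X) : 0 ≤ Fupd P π Q η q x := by
  refine mul_nonneg (inv_nonneg.mpr (mass_nonneg hπ Q q)) ?_
  exact Finset.sum_nonneg fun y _ => mul_nonneg (hP _ _ _) (hπ y)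

lemma predSeq_nonneg (hP : ∀ x u x', 0 ≤ P x u x') :
    ∀ (l : List M) (π : X → ℝ), (∀ x, 0 ≤ π x) → ∀ x, 0 ≤ predSeq P γe γc π l x
  | [], _, hπ, x => hπ x
  | q :: l, π, hπ, x =>
    predSeq_nonneg hP l _ (Fupd_nonneg P hP hπ (γe π) (γc π) q) x

lemma predAt_nonneg (hP : ∀ x u x', 0 ≤ P x u x') {π0 : X → ℝ} (hπ0 : ∀ x, 0 ≤ π0 x)
    {n : ℕ} (qs : Fin n → M) (s : ℕ) (x : X) : 0 ≤ predAt P γe γc π0 qs s x :=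
  predSeq_nonneg P γe γc hP _ π0 hπ0 x

lemma predAt_zero (π0 : X → ℝ) {n : ℕ} (qs : Fin n → M) :
    predAt P γe γc π0 qs 0 = π0 := rfl

lemma predSeq_concat (a : M) :
    ∀ (l : List M) (π : X → ℝ),
    predSeq P γe γc π (l ++ [a]) =
      Fupd P (predSeq P γe γc π l) (γe (predSeq P γe γc π l))
        (γc (predSeq P γe γc π l)) a
  | [], π => rfl
  | q :: l, π => predSeq_concat a l (Fupd P π (γe π) (γc π) q)

lemma predAt_succ (π0 : X → ℝ) {n : ℕ} (qs : Fin n → M) (s : ℕ) (h : s < n) :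
    predAt P γe γc π0 qs (s + 1) =
      Fupd P (predAt P γe γc π0 qs s) (γe (predAt P γe γc π0 qs s))
        (γc (predAt P γe γc π0 qs s)) (qs ⟨s, h⟩) := by
  unfold predAt
  have hs : (List.ofFn qs)[s]? = some (qs ⟨s, h⟩) := by
    rw [List.getElem?_eq_getElem (by simpa using h)]
    simp
  rw [List.take_succ, hs]
  simpa using predSeq_concat P γe γc (qs ⟨s, h⟩) ((List.ofFn qs).take s) π0

lemma predAt_castSucc (π0 : X → ℝ) {n : ℕ} (qs : Fin (n + 1) → M) (s : ℕ) (h : s ≤ n) :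
    predAt P γe γc π0 qs s = predAt P γe γc π0 (qs ∘ Fin.castSucc) s := by
  unfold predAt
  rw [List.ofFn_succ' qs, List.concat_eq_append,
    List.take_append_of_le_length (by simpa using h)]
  rfl

lemma law_succ (π0 : X → ℝ) (t : ℕ) (xs : Fin (t + 1 + 1) → X) (qs : Fin (t + 1 + 1) → M) :
    law P γe γc π0 (t + 1 + 1) xs qs =
      law P γe γc π0 (t + 1) (xs ∘ Fin.castSucc) (qs ∘ Fin.castSucc) *
        (P (xs (Fin.castSucc (Fin.last t)))
            (γc (predAt P γe γc π0 (qs ∘ Fin.castSucc) t)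
              (γe (predAt P γe γc π0 (qs ∘ Fin.castSucc) t))
              (qs (Fin.castSucc (Fin.last t))))
            (xs (Fin.last (t + 1))) *
          (if qs (Fin.last (t + 1)) =
              γe (predAt P γe γc π0 qs (t + 1)) (xs (Fin.last (t + 1)))
            then (1 : ℝ) else 0)) := by
  unfold law
  rw [Fin.prod_univ_castSucc]
  congr 1
  · refine Finset.prod_congr rfl fun s _ => ?_
    have hs1 : ((Fin.castSucc s : Fin (t + 1 + 1)) : ℕ) = (s : ℕ) := rfl
    by_cases h0 : (s : ℕ) = 0
    · simp only [hs1, h0, if_pos, Function.comp]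
      rw [predAt_zero P γe γc π0 qs, predAt_zero P γe γc π0 (qs ∘ Fin.castSucc)]
    · simp only [hs1, h0, if_neg, Function.comp]
      rw [predAt_castSucc P γe γc π0 qs ((s : ℕ) - 1)
          (le_trans (Nat.sub_le _ _) (le_of_lt s.isLt)),
        predAt_castSucc P γe γc π0 qs (s : ℕ) (le_of_lt s.isLt)]
      rfl
  · have hlast : ((Fin.last (t + 1) : Fin (t + 1 + 1)) : ℕ) = t + 1 := rfl
    have h0 : ¬ ((Fin.last (t + 1) : Fin (t + 1 + 1)) : ℕ) = 0 := by simp [hlast]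
    rw [if_neg h0,
      predAt_castSucc P γe γc π0 qs (((Fin.last (t + 1) : Fin (t + 1 + 1)) : ℕ) - 1)
        (by simp)]
    rfl

/-- Key filtration identity, proved by induction on `t`. -/
lemma key (hP : ∀ x u x', 0 ≤ P x u x') (π0 : X → ℝ) (hπ0 : ∀ x, 0 ≤ π0 x) :
    ∀ (t : ℕ) (qs : Fin (t + 1) → M) (y : X),
    (∑ xs : Fin (t + 1) → X,
        law P γe γc π0 (t + 1) xs qs * (if xs (Fin.last t) = y then (1 : ℝ) else 0))
    = (∏ s : Fin t,
        mass (predAt P γe γc π0 qs (s : ℕ)) (γe (predAt P γe γc π0 qs (s : ℕ)))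
          (qs (Fin.castSucc s))) *
      (if qs (Fin.last t) = γe (predAt P γe γc π0 qs t) y
        then predAt P γe γc π0 qs t y else 0) := by
  intro t
  induction t with
  | zero =>
    intro qs y
    rw [← (Equiv.funUnique (Fin 1) X).symm.sum_comp]
    simp only [Equiv.funUnique_symm_apply, law, uniqueElim_const, Fin.prod_univ_succ,
      Fin.prod_univ_zero, mul_one]
    have h1 : (Fin.last 0) = (0 : Fin 1) := rfl
    have h2 : ((0 : Fin 1) : ℕ) = 0 := rfl
    simp only [h1, h2, if_pos, predAt_zero]
    simp [mul_ite, ite_mul]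
  | succ t ih =>
    intro qs y
    -- notation
    have hcast : ∀ s : ℕ, s ≤ t + 1 →
        predAt P γe γc π0 qs s = predAt P γe γc π0 (qs ∘ Fin.castSucc) s :=
      fun s hs => predAt_castSucc P γe γc π0 qs s hs
    -- step 1: reindex the sum via snoc
    rw [← Equiv.sum_comp (Fin.snocEquiv (fun _ : Fin (t + 1 + 1) => X))
        (fun xs => law P γe γc π0 (t + 1 + 1) xs qs *
          (if xs (Fin.last (t + 1)) = y then (1 : ℝ) else 0)),
      Fintype.sum_prod_type]
    have hterm : ∀ (z : X) (g : Fin (t + 1) → X),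
        law P γe γc π0 (t + 1 + 1)
            ((Fin.snocEquiv (fun _ : Fin (t + 1 + 1) => X)) (z, g)) qs *
          (if (Fin.snocEquiv (fun _ : Fin (t + 1 + 1) => X)) (z, g) (Fin.last (t + 1)) = y
            then (1 : ℝ) else 0)
        = law P γe γc π0 (t + 1) g (qs ∘ Fin.castSucc) *
            (P (g (Fin.last t))
                (γc (predAt P γe γc π0 (qs ∘ Fin.castSucc) t)
                  (γe (predAt P γe γc π0 (qs ∘ Fin.castSucc) t))
                  (qs (Fin.castSucc (Fin.last t))))
                z *
              (if qs (Fin.last (t + 1)) = γe (predAt P γe γc π0 qs (t + 1)) z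
                then (1 : ℝ) else 0)) *
            (if z = y then (1 : ℝ) else 0) := by
      intro z g
      have hsnoc : (Fin.snocEquiv (fun _ : Fin (t + 1 + 1) => X)) (z, g) = Fin.snoc g z := rfl
      rw [hsnoc, law_succ]
      have h1 : (Fin.snoc g z : Fin (t + 1 + 1) → X) ∘ Fin.castSucc = g := by
        funext i; simp
      have h2 : (Fin.snoc g z : Fin (t + 1 + 1) → X) (Fin.last (t + 1)) = z := by simp
      have h3 : (Fin.snoc g z : Fin (t + 1 + 1) → X) (Fin.castSucc (Fin.last t))
          = g (Fin.last t) := by simp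
      rw [h1, h2, h3]
    simp only [hterm]
    -- collapse the sum over z using the (z = y) indicator
    have hz : ∀ z : X,
        (∑ g : Fin (t + 1) → X,
          law P γe γc π0 (t + 1) g (qs ∘ Fin.castSucc) *
            (P (g (Fin.last t)) (γc (predAt P γe γc π0 (qs ∘ Fin.castSucc) t) (γe (predAt P γe γc π0 (qs ∘ Fin.castSucc) t)) (qs (Fin.castSucc (Fin.last t)))) z *
              (if qs (Fin.last (t + 1)) = γe (predAt P γe γc π0 qs (t + 1)) z
                then (1 : ℝ) else 0)) *
            (if z = y then (1 : ℝ) else 0))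
        = (if z = y then
            (∑ g : Fin (t + 1) → X,
              law P γe γc π0 (t + 1) g (qs ∘ Fin.castSucc) *
                (P (g (Fin.last t)) (γc (predAt P γe γc π0 (qs ∘ Fin.castSucc) t) (γe (predAt P γe γc π0 (qs ∘ Fin.castSucc) t)) (qs (Fin.castSucc (Fin.last t)))) z *
                  (if qs (Fin.last (t + 1)) = γe (predAt P γe γc π0 qs (t + 1)) z
                    then (1 : ℝ) else 0)))
            else 0) := by
      intro z
      by_cases h : z = y <;> simp [h]
    rw [Finset.sum_congr rfl fun z _ => hz z, Finset.sum_ite_eq' Finset.univ y,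
      if_pos (Finset.mem_univ y)]
    -- expand P (g last) u y as a sum over the value w of g at the last coordinate
    have hP1 : ∀ g : Fin (t + 1) → X,
        P (g (Fin.last t)) (γc (predAt P γe γc π0 (qs ∘ Fin.castSucc) t) (γe (predAt P γe γc π0 (qs ∘ Fin.castSucc) t)) (qs (Fin.castSucc (Fin.last t)))) y
        = ∑ w : X, (if g (Fin.last t) = w then (1 : ℝ) else 0) * P w (γc (predAt P γe γc π0 (qs ∘ Fin.castSucc) t) (γe (predAt P γe γc π0 (qs ∘ Fin.castSucc) t)) (qs (Fin.castSucc (Fin.last t)))) y := by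
      intro g
      simp [ite_mul]
    set c : ℝ := if qs (Fin.last (t + 1)) = γe (predAt P γe γc π0 qs (t + 1)) y
      then (1 : ℝ) else 0 with hc
    calc
      (∑ g : Fin (t + 1) → X,
          law P γe γc π0 (t + 1) g (qs ∘ Fin.castSucc) *
            (P (g (Fin.last t)) (γc (predAt P γe γc π0 (qs ∘ Fin.castSucc) t) (γe (predAt P γe γc π0 (qs ∘ Fin.castSucc) t)) (qs (Fin.castSucc (Fin.last t)))) y * c))
        = ∑ g : Fin (t + 1) → X, ∑ w : X,
            (law P γe γc π0 (t + 1) g (qs ∘ Fin.castSucc) *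
              (if g (Fin.last t) = w then (1 : ℝ) else 0)) * (P w (γc (predAt P γe γc π0 (qs ∘ Fin.castSucc) t) (γe (predAt P γe γc π0 (qs ∘ Fin.castSucc) t)) (qs (Fin.castSucc (Fin.last t)))) y * c) := by
          refine Finset.sum_congr rfl fun g _ => ?_
          rw [hP1 g, Finset.sum_mul, Finset.mul_sum]
          exact Finset.sum_congr rfl fun w _ => by ring
      _ = ∑ w : X, (∑ g : Fin (t + 1) → X,
            law P γe γc π0 (t + 1) g (qs ∘ Fin.castSucc) *
              (if g (Fin.last t) = w then (1 : ℝ) else 0)) * (P w (γc (predAt P γe γc π0 (qs ∘ Fin.castSucc) t) (γe (predAt P γe γc π0 (qs ∘ Fin.castSucc) t)) (qs (Fin.castSucc (Fin.last t)))) y * c) := by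
          rw [Finset.sum_comm]
          exact Finset.sum_congr rfl fun w _ => (Finset.sum_mul _ _ _).symm
      _ = ∑ w : X, ((∏ s : Fin t, mass (predAt P γe γc π0 (qs ∘ Fin.castSucc) (s : ℕ)) (γe (predAt P γe γc π0 (qs ∘ Fin.castSucc) (s : ℕ))) ((qs ∘ Fin.castSucc) (Fin.castSucc s))) *
            (if (qs ∘ Fin.castSucc) (Fin.last t) = γe (predAt P γe γc π0 (qs ∘ Fin.castSucc) t) w then predAt P γe γc π0 (qs ∘ Fin.castSucc) t w else 0)) *
            (P w (γc (predAt P γe γc π0 (qs ∘ Fin.castSucc) t) (γe (predAt P γe γc π0 (qs ∘ Fin.castSucc) t)) (qs (Fin.castSucc (Fin.last t)))) y * c) := by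
          exact Finset.sum_congr rfl fun w _ => by rw [ih (qs ∘ Fin.castSucc) w]
      _ = (∏ s : Fin (t + 1),
            mass (predAt P γe γc π0 qs (s : ℕ)) (γe (predAt P γe γc π0 qs (s : ℕ)))
              (qs (Fin.castSucc s))) *
          (if qs (Fin.last (t + 1)) = γe (predAt P γe γc π0 qs (t + 1)) y
            then predAt P γe γc π0 qs (t + 1) y else 0) := by
          have hprod : (∏ s : Fin (t + 1),
              mass (predAt P γe γc π0 qs (s : ℕ)) (γe (predAt P γe γc π0 qs (s : ℕ)))
                (qs (Fin.castSucc s)))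
              = (∏ s : Fin t, mass (predAt P γe γc π0 (qs ∘ Fin.castSucc) (s : ℕ)) (γe (predAt P γe γc π0 (qs ∘ Fin.castSucc) (s : ℕ))) ((qs ∘ Fin.castSucc) (Fin.castSucc s))) * mass (predAt P γe γc π0 (qs ∘ Fin.castSucc) t) (γe (predAt P γe γc π0 (qs ∘ Fin.castSucc) t)) (qs (Fin.castSucc (Fin.last t))) := by
            rw [Fin.prod_univ_castSucc]
            congr 1
            · refine Finset.prod_congr rfl fun s _ => ?_
              rw [show ((Fin.castSucc s : Fin (t + 1)) : ℕ) = (s : ℕ) from rfl,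
                hcast (s : ℕ) (le_trans (le_of_lt s.isLt) (Nat.le_succ t))]
              rfl
            · rw [show ((Fin.last t : Fin (t + 1)) : ℕ) = t from rfl,
                hcast t (Nat.le_succ t)]
          have hnext : predAt P γe γc π0 qs (t + 1)
              = Fupd P (predAt P γe γc π0 (qs ∘ Fin.castSucc) t) (γe (predAt P γe γc π0 (qs ∘ Fin.castSucc) t)) (γc (predAt P γe γc π0 (qs ∘ Fin.castSucc) t)) (qs (Fin.castSucc (Fin.last t))) := by
            rw [predAt_succ P γe γc π0 qs t (by omega), hcast t (Nat.le_succ t)]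
            rfl
          rw [hc, hprod, hnext]
          by_cases hcond : qs (Fin.last (t + 1))
              = γe (Fupd P (predAt P γe γc π0 (qs ∘ Fin.castSucc) t) (γe (predAt P γe γc π0 (qs ∘ Fin.castSucc) t)) (γc (predAt P γe γc π0 (qs ∘ Fin.castSucc) t)) (qs (Fin.castSucc (Fin.last t)))) y
          · rw [if_pos hcond, if_pos hcond]
            have hFy : Fupd P (predAt P γe γc π0 (qs ∘ Fin.castSucc) t) (γe (predAt P γe γc π0 (qs ∘ Fin.castSucc) t)) (γc (predAt P γe γc π0 (qs ∘ Fin.castSucc) t)) (qs (Fin.castSucc (Fin.last t))) y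
                = (mass (predAt P γe γc π0 (qs ∘ Fin.castSucc) t) (γe (predAt P γe γc π0 (qs ∘ Fin.castSucc) t)) (qs (Fin.castSucc (Fin.last t))))⁻¹ * (∑ w ∈ Finset.univ.filter (fun w => γe (predAt P γe γc π0 (qs ∘ Fin.castSucc) t) w = qs (Fin.castSucc (Fin.last t))), P w (γc (predAt P γe γc π0 (qs ∘ Fin.castSucc) t) (γe (predAt P γe γc π0 (qs ∘ Fin.castSucc) t)) (qs (Fin.castSucc (Fin.last t)))) y * predAt P γe γc π0 (qs ∘ Fin.castSucc) t w) := rfl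
            have hLS : (∑ w : X, ((∏ s : Fin t, mass (predAt P γe γc π0 (qs ∘ Fin.castSucc) (s : ℕ)) (γe (predAt P γe γc π0 (qs ∘ Fin.castSucc) (s : ℕ))) ((qs ∘ Fin.castSucc) (Fin.castSucc s))) *
                  (if (qs ∘ Fin.castSucc) (Fin.last t) = γe (predAt P γe γc π0 (qs ∘ Fin.castSucc) t) w
                    then predAt P γe γc π0 (qs ∘ Fin.castSucc) t w else 0)) * (P w (γc (predAt P γe γc π0 (qs ∘ Fin.castSucc) t) (γe (predAt P γe γc π0 (qs ∘ Fin.castSucc) t)) (qs (Fin.castSucc (Fin.last t)))) y * 1))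
                = (∏ s : Fin t, mass (predAt P γe γc π0 (qs ∘ Fin.castSucc) (s : ℕ)) (γe (predAt P γe γc π0 (qs ∘ Fin.castSucc) (s : ℕ))) ((qs ∘ Fin.castSucc) (Fin.castSucc s))) * (∑ w ∈ Finset.univ.filter (fun w => γe (predAt P γe γc π0 (qs ∘ Fin.castSucc) t) w = qs (Fin.castSucc (Fin.last t))), P w (γc (predAt P γe γc π0 (qs ∘ Fin.castSucc) t) (γe (predAt P γe γc π0 (qs ∘ Fin.castSucc) t)) (qs (Fin.castSucc (Fin.last t)))) y * predAt P γe γc π0 (qs ∘ Fin.castSucc) t w) := by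
              rw [Finset.mul_sum, Finset.sum_filter]
              refine Finset.sum_congr rfl fun w _ => ?_
              simp only [Function.comp_apply]
              by_cases hw : γe (predAt P γe γc π0 (qs ∘ Fin.castSucc) t) w = qs (Fin.castSucc (Fin.last t))
              · rw [if_pos hw, if_pos hw.symm]; ring
              · rw [if_neg hw, if_neg fun h => hw h.symm]; ring
            rw [hLS, hFy]
            by_cases hm : (mass (predAt P γe γc π0 (qs ∘ Fin.castSucc) t) (γe (predAt P γe γc π0 (qs ∘ Fin.castSucc) t)) (qs (Fin.castSucc (Fin.last t)))) = 0
            · have hm' : (∑ x ∈ Finset.univ.filter (fun x => γe (predAt P γe γc π0 (qs ∘ Fin.castSucc) t) x = qs (Fin.castSucc (Fin.last t))),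
                  predAt P γe γc π0 (qs ∘ Fin.castSucc) t x) = 0 := hm
              have hz0 : ∀ w ∈ Finset.univ.filter (fun w => γe (predAt P γe γc π0 (qs ∘ Fin.castSucc) t) w = qs (Fin.castSucc (Fin.last t))),
                  predAt P γe γc π0 (qs ∘ Fin.castSucc) t w = 0 :=
                (Finset.sum_eq_zero_iff_of_nonneg
                  (fun w _ => predAt_nonneg P γe γc hP hπ0 (qs ∘ Fin.castSucc) t w)).mp hm'
              have hS0 : (∑ w ∈ Finset.univ.filter (fun w => γe (predAt P γe γc π0 (qs ∘ Fin.castSucc) t) w = qs (Fin.castSucc (Fin.last t))), P w (γc (predAt P γe γc π0 (qs ∘ Fin.castSucc) t) (γe (predAt P γe γc π0 (qs ∘ Fin.castSucc) t)) (qs (Fin.castSucc (Fin.last t)))) y * predAt P γe γc π0 (qs ∘ Fin.castSucc) t w) = 0 :=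
                Finset.sum_eq_zero fun w hw => by rw [hz0 w hw, mul_zero]
              rw [hS0, hm]
              ring
            · rw [mul_assoc, ← mul_assoc (mass (predAt P γe γc π0 (qs ∘ Fin.castSucc) t) (γe (predAt P γe γc π0 (qs ∘ Fin.castSucc) t)) (qs (Fin.castSucc (Fin.last t)))) ((mass (predAt P γe γc π0 (qs ∘ Fin.castSucc) t) (γe (predAt P γe γc π0 (qs ∘ Fin.castSucc) t)) (qs (Fin.castSucc (Fin.last t))))⁻¹) _, mul_inv_cancel₀ hm, one_mul]
          · rw [if_neg hcond, if_neg hcond]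
            simp


end Aux

/-- Under any controlled-predictor policy, the recursively defined
predictor is the true Bayesian predictor: for every `t ≥ 0` and every output history
`q_{[0,t]}` of positive probability under the trajectory law, and every `x ∈ 𝕏`, the
conditional pmf of `x_{t+1}` given `q_{[0,t]}` equals `F(π_t, Q_t, η_t, q_t)(x)`,
where `π_0` is the initial pmf and `π_{s+1} = F(π_s, Q_s, η_s, q_s)`. -/
theorem predictor_is_bayesian
    [Fintype X] [Fintype U] [Fintype M]
    [Nonempty X] [Nonempty U] [Nonempty M] [DecidableEq X] [DecidableEq M]
    (P : X → U → X → ℝ) (hP : ∀ x u, IsPmf (P x u))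
    (γe : (X → ℝ) → (X → M)) (γc : (X → ℝ) → ((X → M) → M → U))
    (π0 : X → ℝ) (hπ0 : IsPmf π0)
    (t : ℕ) (qs : Fin (t + 1) → M)
    (hpos : 0 < outProb P γe γc π0 (t + 1) qs) (x : X) :
    (∑ xs : Fin (t + 1) → X,
        law P γe γc π0 (t + 1) xs qs *
          P (xs (Fin.last t))
            (γc (predAt P γe γc π0 qs t) (γe (predAt P γe γc π0 qs t))
              (qs (Fin.last t)))
            x)
      / outProb P γe γc π0 (t + 1) qs
    = Fupd P (predAt P γe γc π0 qs t) (γe (predAt P γe γc π0 qs t))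
        (γc (predAt P γe γc π0 qs t)) (qs (Fin.last t)) x := by
  have hP' : ∀ x u x', 0 ≤ P x u x' := fun a b c => (hP a b).1 c
  have hkey := key P γe γc hP' π0 hπ0.1 t qs
  -- the denominator factorizes
  have hD : outProb P γe γc π0 (t + 1) qs = (∏ s : Fin t, mass (predAt P γe γc π0 qs (s : ℕ)) (γe (predAt P γe γc π0 qs (s : ℕ))) (qs (Fin.castSucc s))) * (mass (predAt P γe γc π0 qs t) (γe (predAt P γe γc π0 qs t)) (qs (Fin.last t))) := by
    have h1 : ∀ xs : Fin (t + 1) → X,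
        law P γe γc π0 (t + 1) xs qs
        = ∑ y : X, law P γe γc π0 (t + 1) xs qs *
            (if xs (Fin.last t) = y then (1 : ℝ) else 0) := by
      intro xs
      rw [← Finset.mul_sum]
      simp [Finset.sum_ite_eq]
    calc outProb P γe γc π0 (t + 1) qs
        = ∑ xs : Fin (t + 1) → X, ∑ y : X, law P γe γc π0 (t + 1) xs qs *
            (if xs (Fin.last t) = y then (1 : ℝ) else 0) :=
          Finset.sum_congr rfl fun xs _ => h1 xs
      _ = ∑ y : X, ∑ xs : Fin (t + 1) → X, law P γe γc π0 (t + 1) xs qs *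
            (if xs (Fin.last t) = y then (1 : ℝ) else 0) := Finset.sum_comm
      _ = ∑ y : X, (∏ s : Fin t, mass (predAt P γe γc π0 qs (s : ℕ)) (γe (predAt P γe γc π0 qs (s : ℕ))) (qs (Fin.castSucc s))) *
            (if qs (Fin.last t) = γe (predAt P γe γc π0 qs t) y then predAt P γe γc π0 qs t y else 0) :=
          Finset.sum_congr rfl fun y _ => hkey y
      _ = (∏ s : Fin t, mass (predAt P γe γc π0 qs (s : ℕ)) (γe (predAt P γe γc π0 qs (s : ℕ))) (qs (Fin.castSucc s))) * (mass (predAt P γe γc π0 qs t) (γe (predAt P γe γc π0 qs t)) (qs (Fin.last t))) := by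
          rw [← Finset.mul_sum]
          congr 1
          unfold mass
          rw [Finset.sum_filter]
          refine Finset.sum_congr rfl fun w _ => ?_
          by_cases hw : γe (predAt P γe γc π0 qs t) w = qs (Fin.last t)
          · rw [if_pos hw, if_pos hw.symm]
          · rw [if_neg hw, if_neg fun h => hw h.symm]
  -- the numerator factorizes
  have hN : (∑ xs : Fin (t + 1) → X,
        law P γe γc π0 (t + 1) xs qs * P (xs (Fin.last t)) (γc (predAt P γe γc π0 qs t) (γe (predAt P γe γc π0 qs t)) (qs (Fin.last t))) x)
      = (∏ s : Fin t, mass (predAt P γe γc π0 qs (s : ℕ)) (γe (predAt P γe γc π0 qs (s : ℕ))) (qs (Fin.castSucc s))) * (∑ w ∈ Finset.univ.filter (fun w => γe (predAt P γe γc π0 qs t) w = qs (Fin.last t)), P w (γc (predAt P γe γc π0 qs t) (γe (predAt P γe γc π0 qs t)) (qs (Fin.last t))) x * predAt P γe γc π0 qs t w) := by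
    have h1 : ∀ xs : Fin (t + 1) → X,
        P (xs (Fin.last t)) (γc (predAt P γe γc π0 qs t) (γe (predAt P γe γc π0 qs t)) (qs (Fin.last t))) x
        = ∑ w : X, (if xs (Fin.last t) = w then (1 : ℝ) else 0) * P w (γc (predAt P γe γc π0 qs t) (γe (predAt P γe γc π0 qs t)) (qs (Fin.last t))) x := by
      intro xs
      simp [ite_mul]
    calc (∑ xs : Fin (t + 1) → X,
          law P γe γc π0 (t + 1) xs qs * P (xs (Fin.last t)) (γc (predAt P γe γc π0 qs t) (γe (predAt P γe γc π0 qs t)) (qs (Fin.last t))) x)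
        = ∑ xs : Fin (t + 1) → X, ∑ w : X,
            (law P γe γc π0 (t + 1) xs qs *
              (if xs (Fin.last t) = w then (1 : ℝ) else 0)) * P w (γc (predAt P γe γc π0 qs t) (γe (predAt P γe γc π0 qs t)) (qs (Fin.last t))) x := by
          refine Finset.sum_congr rfl fun xs _ => ?_
          rw [h1 xs, Finset.mul_sum]
          exact Finset.sum_congr rfl fun w _ => by ring
      _ = ∑ w : X, (∑ xs : Fin (t + 1) → X,
            law P γe γc π0 (t + 1) xs qs *
              (if xs (Fin.last t) = w then (1 : ℝ) else 0)) * P w (γc (predAt P γe γc π0 qs t) (γe (predAt P γe γc π0 qs t)) (qs (Fin.last t))) x := by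
          rw [Finset.sum_comm]
          exact Finset.sum_congr rfl fun w _ => (Finset.sum_mul _ _ _).symm
      _ = ∑ w : X, ((∏ s : Fin t, mass (predAt P γe γc π0 qs (s : ℕ)) (γe (predAt P γe γc π0 qs (s : ℕ))) (qs (Fin.castSucc s))) *
            (if qs (Fin.last t) = γe (predAt P γe γc π0 qs t) w then predAt P γe γc π0 qs t w else 0)) * P w (γc (predAt P γe γc π0 qs t) (γe (predAt P γe γc π0 qs t)) (qs (Fin.last t))) x := by
          exact Finset.sum_congr rfl fun w _ => by rw [hkey w]
      _ = (∏ s : Fin t, mass (predAt P γe γc π0 qs (s : ℕ)) (γe (predAt P γe γc π0 qs (s : ℕ))) (qs (Fin.castSucc s))) * (∑ w ∈ Finset.univ.filter (fun w => γe (predAt P γe γc π0 qs t) w = qs (Fin.last t)), P w (γc (predAt P γe γc π0 qs t) (γe (predAt P γe γc π0 qs t)) (qs (Fin.last t))) x * predAt P γe γc π0 qs t w) := by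
          rw [Finset.mul_sum, Finset.sum_filter]
          refine Finset.sum_congr rfl fun w _ => ?_
          by_cases hw : γe (predAt P γe γc π0 qs t) w = qs (Fin.last t)
          · rw [if_pos hw, if_pos hw.symm]; ring
          · rw [if_neg hw, if_neg fun h => hw h.symm]; ring
  have hF : Fupd P (predAt P γe γc π0 qs t) (γe (predAt P γe γc π0 qs t)) (γc (predAt P γe γc π0 qs t)) (qs (Fin.last t)) x
      = (mass (predAt P γe γc π0 qs t) (γe (predAt P γe γc π0 qs t)) (qs (Fin.last t)))⁻¹ * (∑ w ∈ Finset.univ.filter (fun w => γe (predAt P γe γc π0 qs t) w = qs (Fin.last t)), P w (γc (predAt P γe γc π0 qs t) (γe (predAt P γe γc π0 qs t)) (qs (Fin.last t))) x * predAt P γe γc π0 qs t w) := rfl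
  have hpos' : (0 : ℝ) < (∏ s : Fin t, mass (predAt P γe γc π0 qs (s : ℕ)) (γe (predAt P γe γc π0 qs (s : ℕ))) (qs (Fin.castSucc s))) * (mass (predAt P γe γc π0 qs t) (γe (predAt P γe γc π0 qs t)) (qs (Fin.last t))) := by rw [← hD]; exact hpos
  have hCt : (∏ s : Fin t, mass (predAt P γe γc π0 qs (s : ℕ)) (γe (predAt P γe γc π0 qs (s : ℕ))) (qs (Fin.castSucc s))) ≠ 0 := left_ne_zero_of_mul (ne_of_gt hpos')
  have hm : (mass (predAt P γe γc π0 qs t) (γe (predAt P γe γc π0 qs t)) (qs (Fin.last t))) ≠ 0 := right_ne_zero_of_mul (ne_of_gt hpos')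
  rw [hN, hD, hF]
  field_simp

end
end

section
/- Under any controlled-predictor policy, the conditional law of the channel output given the past outputs is determined by the predictor: for every t ≥ 0, every output history q_{[0,t-1]} ∈ ℳ^t of positive probability under the trajectory law, and every q ∈ ℳ, P(q_t = q | q_{[0,t-1]}) = π_t(Q_t⁻¹(q)), where π_t is the recursively defined predictor and Q_t = γ^e(π_t). -/
open Finset

noncomputable section

variable {X U M : Type}

section Aux

set_option linter.unusedSectionVars false
variable [Fintype X] [Fintype U] [Fintype M] [DecidableEq X] [DecidableEq M]
variable (P : X → U → X → ℝ) (γe : (X → ℝ) → (X → M)) (γc : (X → ℝ) → ((X → M) → M → U))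
  (π0 : X → ℝ)

lemma ofFn_snoc_aux {n : ℕ} (qs : Fin n → M) (q : M) :
    List.ofFn (Fin.snoc qs q) = List.ofFn qs ++ [q] := by
  rw [List.ofFn_succ']
  simp [Fin.snoc_castSucc, List.concat_eq_append]

lemma predSeq_append (l : List M) (q : M) (π : X → ℝ) :
    predSeq P γe γc π (l ++ [q])
      = Fupd P (predSeq P γe γc π l) (γe (predSeq P γe γc π l))
          (γc (predSeq P γe γc π l)) q := by
  induction l generalizing π with
  | nil => rfl
  | cons a l ih =>
    simp only [List.cons_append, predSeq]
    exact ih _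

lemma predAt_snoc {n : ℕ} (qs : Fin n → M) (q : M) {s : ℕ} (hs : s ≤ n) :
    predAt P γe γc π0 (Fin.snoc qs q) s = predAt P γe γc π0 qs s := by
  unfold predAt
  rw [ofFn_snoc_aux, List.take_append_of_le_length (by simpa using hs)]

lemma predAt_full {n : ℕ} (qs : Fin n → M) :
    predAt P γe γc π0 qs n = predSeq P γe γc π0 (List.ofFn qs) := by
  unfold predAt
  rw [List.take_of_length_le (by simp)]

lemma predAt_snoc_top {n : ℕ} (qs : Fin n → M) (q : M) :
    predAt P γe γc π0 (Fin.snoc qs q) (n + 1)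
      = Fupd P (predAt P γe γc π0 qs n) (γe (predAt P γe γc π0 qs n))
          (γc (predAt P γe γc π0 qs n)) q := by
  rw [show predAt P γe γc π0 (Fin.snoc qs q) (n+1)
      = predSeq P γe γc π0 (List.ofFn (Fin.snoc qs q)) by
    rw [predAt_full]]
  rw [ofFn_snoc_aux, predSeq_append, predAt_full]

/-- The one-step state-transition factor. -/
def stepF (n : ℕ) (qs : Fin n → M) (xs : Fin n → X) (x : X) : ℝ :=
  if hn : n = 0 then π0 x
  else
    P (xs ⟨n - 1, by omega⟩)
      (γc (predAt P γe γc π0 qs (n - 1)) (γe (predAt P γe γc π0 qs (n - 1)))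
        (qs ⟨n - 1, by omega⟩)) x

lemma snoc_mk_lt {n : ℕ} (xs : Fin n → X) (x : X) (k : ℕ) (hk : k < n) (hk' : k < n + 1) :
    Fin.snoc (α := fun _ => X) xs x ⟨k, hk'⟩ = xs ⟨k, hk⟩ := by
  simp [Fin.snoc, hk]

lemma snoc_mk_last {n : ℕ} (xs : Fin n → X) (x : X) (h : n < n + 1) :
    Fin.snoc (α := fun _ => X) xs x ⟨n, h⟩ = x := by
  simp [Fin.snoc]

lemma law_snoc {n : ℕ} (xs : Fin n → X) (x : X) (qs : Fin n → M) (q : M) :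
    law P γe γc π0 (n + 1) (Fin.snoc xs x) (Fin.snoc qs q)
      = law P γe γc π0 n xs qs *
        (stepF P γe γc π0 n qs xs x *
          (if q = γe (predAt P γe γc π0 qs n) x then 1 else 0)) := by
  unfold law
  rw [Fin.prod_univ_castSucc]
  congr 1
  · refine Finset.prod_congr rfl fun s _ => ?_
    have hlt : (s : ℕ) - 1 < n := by have := s.isLt; omega
    have hle1 : (s : ℕ) - 1 ≤ n := le_of_lt hlt
    have hle2 : (s : ℕ) ≤ n := le_of_lt s.isLt
    simp only [Fin.coe_castSucc, Fin.snoc_castSucc,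
      predAt_snoc P γe γc π0 qs q hle1, predAt_snoc P γe γc π0 qs q hle2,
      snoc_mk_lt xs x _ hlt, snoc_mk_lt qs q _ hlt]
  · have hlast : ((Fin.last n : Fin (n+1)) : ℕ) = n := rfl
    by_cases h0 : n = 0
    · subst h0
      simp only [hlast, if_pos rfl, Fin.snoc_last, stepF, dif_pos rfl,
        predAt_snoc P γe γc π0 qs q (le_refl 0)]
      simp
    · have hlt : n - 1 < n := by omega
      have hle1 : n - 1 ≤ n := le_of_lt hlt
      simp only [hlast, if_neg h0, Fin.snoc_last, stepF, dif_neg h0,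
        predAt_snoc P γe γc π0 qs q hle1, predAt_snoc P γe γc π0 qs q (le_refl n),
        snoc_mk_lt xs x _ hlt, snoc_mk_lt qs q _ hlt]

def snocEquivX (n : ℕ) : ((Fin n → X) × X) ≃ (Fin (n + 1) → X) where
  toFun := fun p => Fin.snoc p.1 p.2
  invFun := fun f => (Fin.init f, f (Fin.last n))
  left_inv := fun p => by simp [Fin.init_snoc, Fin.snoc_last]
  right_inv := fun f => Fin.snoc_init_self f

lemma sum_snoc {n : ℕ} (f : (Fin (n + 1) → X) → ℝ) :
    ∑ xs : Fin (n + 1) → X, f xs = ∑ xs : Fin n → X, ∑ x : X, f (Fin.snoc xs x) := by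
  rw [← Equiv.sum_comp (snocEquivX (X := X) n) f, Fintype.sum_prod_type]
  rfl

lemma law_nonneg (hP : ∀ x u, IsPmf (P x u)) (hπ0 : IsPmf π0)
    (n : ℕ) (xs : Fin n → X) (qs : Fin n → M) :
    0 ≤ law P γe γc π0 n xs qs := by
  refine Finset.prod_nonneg fun s _ => mul_nonneg ?_ ?_
  · split
    · exact hπ0.1 _
    · exact (hP _ _).1 _
  · split <;> norm_num

lemma outProb_decomp {n : ℕ} (qs : Fin n → M) (q : M) :
    outProb P γe γc π0 (n + 1) (Fin.snoc qs q)
      = ∑ xs : Fin n → X, law P γe γc π0 n xs qs *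
          ∑ x, stepF P γe γc π0 n qs xs x *
            (if q = γe (predAt P γe γc π0 qs n) x then 1 else 0) := by
  unfold outProb
  rw [sum_snoc]
  refine Finset.sum_congr rfl fun xs _ => ?_
  rw [Finset.mul_sum]
  exact Finset.sum_congr rfl fun x _ => law_snoc P γe γc π0 xs x qs q

lemma stepF_snoc {n : ℕ} (qs : Fin n → M) (q : M) (xs : Fin n → X) (x : X) (x' : X) :
    stepF P γe γc π0 (n + 1) (Fin.snoc qs q) (Fin.snoc xs x) x'
      = P x (γc (predAt P γe γc π0 qs n) (γe (predAt P γe γc π0 qs n)) q) x' := by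
  unfold stepF
  rw [dif_neg (Nat.succ_ne_zero n)]
  have h1 : Fin.snoc (α := fun _ => X) xs x ⟨n + 1 - 1, by omega⟩ = x :=
    snoc_mk_last xs x (by omega)
  have h2 : Fin.snoc (α := fun _ => M) qs q ⟨n + 1 - 1, by omega⟩ = q :=
    snoc_mk_last qs q (by omega)
  have h3 : n + 1 - 1 = n := rfl
  rw [h1, h2, h3, predAt_snoc P γe γc π0 qs q (le_refl n)]

lemma mass_as_sum (π : X → ℝ) (Q : X → M) (q : M) :
    mass π Q q = ∑ x, π x * (if q = Q x then 1 else 0) := by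
  unfold mass
  rw [Finset.sum_filter]
  refine Finset.sum_congr rfl fun x _ => ?_
  by_cases h : Q x = q
  · simp [h]
  · rw [if_neg h, if_neg (fun hq => h hq.symm), mul_zero]

lemma master (hP : ∀ x u, IsPmf (P x u)) (hπ0 : IsPmf π0) :
    ∀ (n : ℕ) (qs : Fin n → M), outProb P γe γc π0 n qs ≠ 0 → ∀ g : X → ℝ,
    ∑ xs : Fin n → X, law P γe γc π0 n xs qs *
        (∑ x, stepF P γe γc π0 n qs xs x * g x)
      = outProb P γe γc π0 n qs * ∑ x, predAt P γe γc π0 qs n x * g x := by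
  intro n
  induction n with
  | zero =>
    intro qs _ g
    have h1 : outProb P γe γc π0 0 qs = 1 := by simp [outProb, law]
    rw [h1, one_mul]
    simp [law, stepF, predAt, predSeq]
  | succ n ih =>
    intro qs' hne g
    obtain ⟨qs, q, rfl⟩ : ∃ qs q, qs' = Fin.snoc qs q :=
      ⟨Fin.init qs', qs' (Fin.last n), (Fin.snoc_init_self qs').symm⟩
    set πn := predAt P γe γc π0 qs n with hπn
    set u := γc πn (γe πn) q with hu
    -- positivity of the prefix probability
    have hOn : outProb P γe γc π0 n qs ≠ 0 := by
      intro h0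
      apply hne
      rw [outProb_decomp]
      refine Finset.sum_eq_zero fun xs _ => ?_
      have hz : law P γe γc π0 n xs qs = 0 :=
        (Finset.sum_eq_zero_iff_of_nonneg
          (fun xs _ => law_nonneg P γe γc π0 hP hπ0 n xs qs)).mp h0 xs (Finset.mem_univ xs)
      rw [hz, zero_mul]
    have hmass : outProb P γe γc π0 (n + 1) (Fin.snoc qs q)
        = outProb P γe γc π0 n qs * mass πn (γe πn) q := by
      rw [outProb_decomp, ih qs hOn (fun x => if q = γe πn x then 1 else 0),
        mass_as_sum]
    have hm : mass πn (γe πn) q ≠ 0 := fun h => hne (by rw [hmass, h, mul_zero])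
    -- LHS
    have hL : ∑ xs' : Fin (n+1) → X, law P γe γc π0 (n+1) xs' (Fin.snoc qs q) *
          (∑ x', stepF P γe γc π0 (n+1) (Fin.snoc qs q) xs' x' * g x')
        = outProb P γe γc π0 n qs *
            ∑ x, πn x * ((if q = γe πn x then 1 else 0) * ∑ x', P x u x' * g x') := by
      rw [sum_snoc, ← ih qs hOn
        (fun x => (if q = γe πn x then 1 else 0) * ∑ x', P x u x' * g x')]
      refine Finset.sum_congr rfl fun xs _ => ?_
      rw [Finset.mul_sum]
      refine Finset.sum_congr rfl fun x _ => ?_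
      rw [law_snoc]
      simp only [stepF_snoc P γe γc π0 qs q xs x]
      simp only [← hπn, ← hu]
      ring
    rw [hL, hmass, predAt_snoc_top]
    simp only [← hπn, ← hu]
    have key : ∑ x, πn x * ((if q = γe πn x then 1 else 0) * ∑ x', P x u x' * g x')
        = ∑ x ∈ Finset.univ.filter (fun x => γe πn x = q),
            πn x * ∑ x', P x u x' * g x' := by
      rw [Finset.sum_filter]
      refine Finset.sum_congr rfl fun x _ => ?_
      by_cases h : γe πn x = q
      · simp [h]
      · rw [if_neg h, if_neg (fun hq => h hq.symm), zero_mul, mul_zero]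
    have key2 : ∑ x', Fupd P πn (γe πn) (γc πn) q x' * g x'
        = (mass πn (γe πn) q)⁻¹ *
            ∑ x ∈ Finset.univ.filter (fun x => γe πn x = q),
              πn x * ∑ x', P x u x' * g x' := by
      unfold Fupd
      calc ∑ x', ((mass πn (γe πn) q)⁻¹ *
              ∑ x ∈ Finset.univ.filter (fun x => γe πn x = q),
                P x (γc πn (γe πn) q) x' * πn x) * g x'
          = (mass πn (γe πn) q)⁻¹ *
              ∑ x', ∑ x ∈ Finset.univ.filter (fun x => γe πn x = q),
                P x u x' * πn x * g x' := by
            rw [Finset.mul_sum]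
            refine Finset.sum_congr rfl fun x' _ => ?_
            rw [mul_assoc, Finset.sum_mul, ← hu]
        _ = (mass πn (γe πn) q)⁻¹ *
              ∑ x ∈ Finset.univ.filter (fun x => γe πn x = q),
                ∑ x', P x u x' * πn x * g x' := by rw [Finset.sum_comm]
        _ = (mass πn (γe πn) q)⁻¹ *
              ∑ x ∈ Finset.univ.filter (fun x => γe πn x = q),
                πn x * ∑ x', P x u x' * g x' := by
            congr 1
            refine Finset.sum_congr rfl fun x _ => ?_
            rw [Finset.mul_sum]
            exact Finset.sum_congr rfl fun x' _ => by ring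
    rw [key, key2]
    field_simp

lemma outProb_snoc (hP : ∀ x u, IsPmf (P x u)) (hπ0 : IsPmf π0)
    {n : ℕ} (qs : Fin n → M) (hne : outProb P γe γc π0 n qs ≠ 0) (q : M) :
    outProb P γe γc π0 (n + 1) (Fin.snoc qs q)
      = outProb P γe γc π0 n qs *
          mass (predAt P γe γc π0 qs n) (γe (predAt P γe γc π0 qs n)) q := by
  rw [outProb_decomp,
    master P γe γc π0 hP hπ0 n qs hne
      (fun x => if q = γe (predAt P γe γc π0 qs n) x then 1 else 0),
    mass_as_sum]

end Aux

/-- Under any controlled-predictor policy, the conditional law of the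
channel output given the past outputs is determined by the predictor: for every `t ≥ 0`,
every output history `q_{[0,t-1]} ∈ ℳ^t` of positive probability under the trajectory
law, and every `q ∈ ℳ`,
`P(q_t = q | q_{[0,t-1]}) = π_t(Q_t⁻¹(q))`, where `π_t` is the recursively defined
predictor and `Q_t = γ^e(π_t)`. -/
theorem output_conditional_law_eq_predictor_mass
    [Fintype X] [Fintype U] [Fintype M]
    [Nonempty X] [Nonempty U] [Nonempty M] [DecidableEq X] [DecidableEq M]
    (P : X → U → X → ℝ) (hP : ∀ x u, IsPmf (P x u))
    (γe : (X → ℝ) → (X → M)) (γc : (X → ℝ) → ((X → M) → M → U))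
    (π0 : X → ℝ) (hπ0 : IsPmf π0)
    (t : ℕ) (h : Fin t → M) (hpos : 0 < outProb P γe γc π0 t h) (q : M) :
    outProb P γe γc π0 (t + 1) (Fin.snoc h q) / outProb P γe γc π0 t h
      = mass (predAt P γe γc π0 h t) (γe (predAt P γe γc π0 h t)) q := by
  rw [outProb_snoc P γe γc π0 hP hπ0 h hpos.ne' q,
    mul_div_cancel_left₀ _ hpos.ne']


end
end

section
/- One-step filter stability bound: let π, ν ∈ P(𝕏) and Q ∈ 𝒬 be such that for every q ∈ ℳ, ν(Q⁻¹(q)) = 0 implies π(Q⁻¹(q)) = 0. Then Σ_{q ∈ ℳ : π(Q⁻¹(q)) > 0} π(Q⁻¹(q)) · ‖π̄_q − ν̄_q‖_TV ≤ 2 ‖π − ν‖_TV, where π̄_q and ν̄_q are the filters of π and ν given output q. -/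
open Finset

noncomputable section

variable {X M : Type}

/-- Total variation norm `‖π − ν‖_TV := Σ_x |π(x) − ν(x)|`. -/
def tvDist [Fintype X] (π ν : X → ℝ) : ℝ := ∑ x, |π x - ν x|

/-- The filter of `π` given output `q`: `π̄_q(x) := π(x)·1{Q(x)=q} / π(Q⁻¹(q))`. -/
def filterPmf [Fintype X] [DecidableEq M] (π : X → ℝ) (Q : X → M) (q : M) : X → ℝ :=
  fun x => (if Q x = q then π x else 0) / mass π Q q

lemma per_q [Fintype X] [DecidableEq M] (π ν : X → ℝ) (hν0 : ∀ x, 0 ≤ ν x)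
    (Q : X → M) (q : M) (hm : 0 < mass π Q q) (hn : 0 < mass ν Q q) :
    mass π Q q * tvDist (filterPmf π Q q) (filterPmf ν Q q)
      ≤ 2 * ∑ x ∈ Finset.univ.filter (fun x => Q x = q), |π x - ν x| := by
  set a := mass π Q q with ha
  set b := mass ν Q q with hb
  have key : a * tvDist (filterPmf π Q q) (filterPmf ν Q q)
      = ∑ x ∈ Finset.univ.filter (fun x => Q x = q), |π x - (a / b) * ν x| := by
    unfold tvDist filterPmf
    rw [Finset.mul_sum, ← Finset.sum_filter_add_sum_filter_not Finset.univ (fun x => Q x = q)]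
    have h2 : ∑ x ∈ Finset.univ.filter (fun x => ¬ Q x = q),
        a * |(if Q x = q then π x else 0) / a - (if Q x = q then ν x else 0) / b| = 0 := by
      apply Finset.sum_eq_zero
      intro x hx
      simp only [Finset.mem_filter, Finset.mem_univ, true_and] at hx
      simp [hx]
    rw [h2, add_zero]
    apply Finset.sum_congr rfl
    intro x hx
    simp only [Finset.mem_filter, Finset.mem_univ, true_and] at hx
    rw [if_pos hx, if_pos hx]
    have h3 : a * (π x / a - ν x / b) = π x - a / b * ν x := by
      field_simp
    rw [← h3, abs_mul, abs_of_pos hm]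
  rw [key]
  have step1 : ∀ x ∈ Finset.univ.filter (fun x => Q x = q),
      |π x - (a / b) * ν x| ≤ |π x - ν x| + |1 - a / b| * ν x := by
    intro x _
    have : π x - (a / b) * ν x = (π x - ν x) + (1 - a / b) * ν x := by ring
    rw [this]
    refine (abs_add_le _ _).trans ?_
    rw [abs_mul, abs_of_nonneg (hν0 x)]
  calc ∑ x ∈ Finset.univ.filter (fun x => Q x = q), |π x - (a / b) * ν x|
      ≤ ∑ x ∈ Finset.univ.filter (fun x => Q x = q), (|π x - ν x| + |1 - a / b| * ν x) :=
        Finset.sum_le_sum step1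
    _ = (∑ x ∈ Finset.univ.filter (fun x => Q x = q), |π x - ν x|) + |1 - a / b| * b := by
        rw [Finset.sum_add_distrib, ← Finset.mul_sum, hb, mass]
    _ ≤ 2 * ∑ x ∈ Finset.univ.filter (fun x => Q x = q), |π x - ν x| := by
        have h1 : |1 - a / b| * b = |b - a| := by
          have h4 : b * (1 - a / b) = b - a := by field_simp
          rw [← h4, abs_mul, abs_of_pos hn, mul_comm]
        have h2 : |b - a| ≤ ∑ x ∈ Finset.univ.filter (fun x => Q x = q), |π x - ν x| := by
          have : b - a = ∑ x ∈ Finset.univ.filter (fun x => Q x = q), (ν x - π x) := by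
            rw [ha, hb, mass, mass, ← Finset.sum_sub_distrib]
          rw [this]
          refine (Finset.abs_sum_le_sum_abs _ _).trans ?_
          apply Finset.sum_le_sum
          intro x _
          rw [abs_sub_comm]
        rw [h1]
        linarith

/-- One-step filter stability bound: let `π, ν ∈ P(𝕏)` and `Q ∈ 𝒬` be
such that for every `q ∈ ℳ`, `ν(Q⁻¹(q)) = 0` implies `π(Q⁻¹(q)) = 0`. Then
`Σ_{q : π(Q⁻¹(q)) > 0} π(Q⁻¹(q)) · ‖π̄_q − ν̄_q‖_TV ≤ 2 ‖π − ν‖_TV`,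
where `π̄_q` and `ν̄_q` are the filters of `π` and `ν` given output `q`. -/
theorem one_step_filter_stability
    [Fintype X] [Fintype M] [Nonempty X] [Nonempty M] [DecidableEq X] [DecidableEq M]
    (π ν : X → ℝ) (hπ : IsPmf π) (hν : IsPmf ν) (Q : X → M)
    (habs : ∀ q : M, mass ν Q q = 0 → mass π Q q = 0) :
    ∑ q ∈ Finset.univ.filter (fun q => 0 < mass π Q q),
        mass π Q q * tvDist (filterPmf π Q q) (filterPmf ν Q q)
      ≤ 2 * tvDist π ν := by
  have hstep : ∑ q ∈ Finset.univ.filter (fun q => 0 < mass π Q q),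
      mass π Q q * tvDist (filterPmf π Q q) (filterPmf ν Q q)
      ≤ ∑ q ∈ Finset.univ.filter (fun q => 0 < mass π Q q),
          2 * ∑ x ∈ Finset.univ.filter (fun x => Q x = q), |π x - ν x| := by
    apply Finset.sum_le_sum
    intro q hq
    simp only [Finset.mem_filter, Finset.mem_univ, true_and] at hq
    have hbnn : 0 ≤ mass ν Q q := Finset.sum_nonneg fun x _ => hν.1 x
    have hn : 0 < mass ν Q q := by
      rcases hbnn.lt_or_eq with h | h
      · exact h
      · exact absurd (habs q h.symm) (ne_of_gt hq)
    exact per_q π ν hν.1 Q q hq hn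
  refine hstep.trans ?_
  rw [← Finset.mul_sum]
  have : ∑ q ∈ Finset.univ.filter (fun q => 0 < mass π Q q),
      ∑ x ∈ Finset.univ.filter (fun x => Q x = q), |π x - ν x|
      ≤ ∑ q : M, ∑ x ∈ Finset.univ.filter (fun x => Q x = q), |π x - ν x| := by
    apply Finset.sum_le_sum_of_subset_of_nonneg (Finset.filter_subset _ _)
    intro q _ _
    exact Finset.sum_nonneg fun x _ => abs_nonneg _
  have hfib : ∑ q : M, ∑ x ∈ Finset.univ.filter (fun x => Q x = q), |π x - ν x|
      = tvDist π ν := by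
    rw [tvDist]
    exact Finset.sum_fiberwise Finset.univ Q (fun x => |π x - ν x|)
  linarith [this]

end
end

section
/- Dobrushin contraction for the controlled transition kernel: for every u ∈ 𝕌 and all π, ν ∈ P(𝕏), ‖πP_u − νP_u‖_TV ≤ (1 − δ(P,u)) ‖π − ν‖_TV, where (πP_u)(x') := Σ_{x∈𝕏} P(x'|x,u) π(x) and δ(P,u) is the Dobrushin coefficient of P(·|·,u). -/
open Finset

noncomputable section

variable {X U : Type}

/-- The pushforward `(πP_u)(x') := Σ_x P(x'|x,u) π(x)`. -/
def push [Fintype X] (P : X → U → X → ℝ) (u : U) (π : X → ℝ) : X → ℝ :=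
  fun x' => ∑ x, P x u x' * π x

/-- The Dobrushin coefficient `δ(P,u) := min_{i,k} Σ_j min(P(j|i,u), P(j|k,u))`. -/
def dobrushin [Fintype X] [Nonempty X] (P : X → U → X → ℝ) (u : U) : ℝ :=
  Finset.univ.inf' Finset.univ_nonempty
    (fun ik : X × X => ∑ j, min (P ik.1 u j) (P ik.2 u j))

lemma abs_sub_eq_add_sub_two_min (a b : ℝ) : |a - b| = a + b - 2 * min a b := by
  rcases le_total a b with h | h
  · rw [abs_of_nonpos (by linarith), min_eq_left h]; ring
  · rw [abs_of_nonneg (by linarith), min_eq_right h]; ring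

/-- Dobrushin contraction for the controlled transition kernel: for
every `u ∈ 𝕌` and all `π, ν ∈ P(𝕏)`,
`‖πP_u − νP_u‖_TV ≤ (1 − δ(P,u)) ‖π − ν‖_TV`. -/
theorem dobrushin_contraction
    [Fintype X] [Fintype U] [Nonempty X] [Nonempty U] [DecidableEq X]
    (P : X → U → X → ℝ) (hP : ∀ x u, IsPmf (P x u))
    (u : U) (π ν : X → ℝ) (hπ : IsPmf π) (hν : IsPmf ν) :
    tvDist (push P u π) (push P u ν) ≤ (1 - dobrushin P u) * tvDist π ν := by
  obtain ⟨hπ0, hπ1⟩ := hπ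
  obtain ⟨hν0, hν1⟩ := hν
  set φp : X → ℝ := fun x => max (π x - ν x) 0 with hφp
  set φm : X → ℝ := fun x => max (ν x - π x) 0 with hφm
  have hp0 : ∀ x, 0 ≤ φp x := fun x => le_max_right _ _
  have hm0 : ∀ x, 0 ≤ φm x := fun x => le_max_right _ _
  have hsub : ∀ x, φp x - φm x = π x - ν x := by
    intro x
    rcases le_total (π x) (ν x) with h | h
    · rw [hφp, hφm]; simp only
      rw [max_eq_right (by linarith), max_eq_left (by linarith)]; ring
    · rw [hφp, hφm]; simp only
      rw [max_eq_left (by linarith), max_eq_right (by linarith)]; ring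
  have habs : ∀ x, φp x + φm x = |π x - ν x| := by
    intro x
    rcases le_total (π x) (ν x) with h | h
    · rw [hφp, hφm]; simp only
      rw [max_eq_right (by linarith), max_eq_left (by linarith),
        abs_of_nonpos (by linarith)]; ring
    · rw [hφp, hφm]; simp only
      rw [max_eq_left (by linarith), max_eq_right (by linarith),
        abs_of_nonneg (by linarith)]; ring
  set m : ℝ := ∑ x, φp x with hm
  have hmnn : 0 ≤ m := Finset.sum_nonneg fun x _ => hp0 x
  have hm2 : ∑ x, φm x = m := by
    have h0 : ∑ x, (φp x - φm x) = 0 := by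
      simp only [hsub, Finset.sum_sub_distrib, hπ1, hν1, sub_self]
    rw [Finset.sum_sub_distrib] at h0
    linarith
  have htv : tvDist π ν = 2 * m := by
    rw [tvDist]
    have : ∑ x, |π x - ν x| = ∑ x, (φp x + φm x) := by
      apply Finset.sum_congr rfl; intro x _; rw [habs]
    rw [this, Finset.sum_add_distrib, hm2]; ring
  rcases eq_or_lt_of_le hmnn with hmeq | hmpos
  · -- m = 0 : π = ν
    have hpz : ∀ x, φp x = 0 := by
      intro x
      have := (Finset.sum_eq_zero_iff_of_nonneg (fun x _ => hp0 x)).mp hmeq.symm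
      exact this x (Finset.mem_univ x)
    have hmz : ∀ x, φm x = 0 := by
      intro x
      have h := (Finset.sum_eq_zero_iff_of_nonneg (fun x _ => hm0 x)).mp
        (by rw [hm2]; exact hmeq.symm)
      exact h x (Finset.mem_univ x)
    have hπν : π = ν := by
      funext x
      have := hsub x
      rw [hpz x, hmz x] at this
      linarith
    subst hπν
    simp [tvDist]
  · -- m > 0
    -- pointwise key identity
    have key : ∀ x', m * (push P u π x' - push P u ν x')
        = ∑ i, ∑ k, φp i * φm k * (P i u x' - P k u x') := by
      intro x'
      have h1 : push P u π x' - push P u ν x'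
          = ∑ x, P x u x' * φp x - ∑ x, P x u x' * φm x := by
        simp only [push, ← Finset.sum_sub_distrib]
        apply Finset.sum_congr rfl; intro x _
        linear_combination (-(P x u x')) * (hsub x)
      have h2 : ∑ i, ∑ k, φp i * φm k * (P i u x' - P k u x')
          = (∑ k, φm k) * (∑ i, P i u x' * φp i)
            - (∑ i, φp i) * (∑ k, P k u x' * φm k) := by
        have A : (∑ k, φm k) * (∑ i, P i u x' * φp i)
            = ∑ i, ∑ k, φp i * φm k * P i u x' := by
          rw [Finset.sum_mul_sum, Finset.sum_comm]
          exact Finset.sum_congr rfl fun i _ =>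
            Finset.sum_congr rfl fun k _ => by ring
        have B : (∑ i, φp i) * (∑ k, P k u x' * φm k)
            = ∑ i, ∑ k, φp i * φm k * P k u x' := by
          rw [Finset.sum_mul_sum]
          exact Finset.sum_congr rfl fun i _ =>
            Finset.sum_congr rfl fun k _ => by ring
        rw [A, B]
        simp only [mul_sub, Finset.sum_sub_distrib]
      rw [h1, h2, hm2, ← hm]
      ring
    -- bound on the kernel row differences
    have hD : ∀ i k : X, ∑ x', |P i u x' - P k u x'| ≤ 2 * (1 - dobrushin P u) := by
      intro i k
      have hδ : dobrushin P u ≤ ∑ j, min (P i u j) (P k u j) :=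
        Finset.inf'_le _ (Finset.mem_univ (i, k))
      have : ∑ x', |P i u x' - P k u x'|
          = ∑ x', (P i u x' + P k u x' - 2 * min (P i u x') (P k u x')) := by
        apply Finset.sum_congr rfl; intro x' _
        exact abs_sub_eq_add_sub_two_min _ _
      rw [this, Finset.sum_sub_distrib, Finset.sum_add_distrib,
        (hP i u).2, (hP k u).2, ← Finset.mul_sum]
      linarith
    -- main estimate
    have main : m * tvDist (push P u π) (push P u ν) ≤ 2 * (1 - dobrushin P u) * m * m := by
      rw [tvDist, Finset.mul_sum]
      have step1 : ∀ x' : X, m * |push P u π x' - push P u ν x'|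
          ≤ ∑ i, ∑ k, φp i * φm k * |P i u x' - P k u x'| := by
        intro x'
        have : m * |push P u π x' - push P u ν x'|
            = |∑ i, ∑ k, φp i * φm k * (P i u x' - P k u x')| := by
          rw [← key x', abs_mul, abs_of_nonneg hmnn]
        rw [this]
        calc |∑ i, ∑ k, φp i * φm k * (P i u x' - P k u x')|
            ≤ ∑ i, |∑ k, φp i * φm k * (P i u x' - P k u x')| :=
              Finset.abs_sum_le_sum_abs _ _
          _ ≤ ∑ i, ∑ k, φp i * φm k * |P i u x' - P k u x'| := by
              apply Finset.sum_le_sum; intro i _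
              calc |∑ k, φp i * φm k * (P i u x' - P k u x')|
                  ≤ ∑ k, |φp i * φm k * (P i u x' - P k u x')| :=
                    Finset.abs_sum_le_sum_abs _ _
                _ = ∑ k, φp i * φm k * |P i u x' - P k u x'| := by
                    apply Finset.sum_congr rfl; intro k _
                    rw [abs_mul, abs_of_nonneg (mul_nonneg (hp0 i) (hm0 k))]
      calc ∑ x', m * |push P u π x' - push P u ν x'|
          ≤ ∑ x', ∑ i, ∑ k, φp i * φm k * |P i u x' - P k u x'| :=
            Finset.sum_le_sum fun x' _ => step1 x'
        _ = ∑ i, ∑ k, φp i * φm k * ∑ x', |P i u x' - P k u x'| := by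
            rw [Finset.sum_comm]
            apply Finset.sum_congr rfl; intro i _
            rw [Finset.sum_comm]
            apply Finset.sum_congr rfl; intro k _
            rw [Finset.mul_sum]
        _ ≤ ∑ i, ∑ k, φp i * φm k * (2 * (1 - dobrushin P u)) := by
            apply Finset.sum_le_sum; intro i _
            apply Finset.sum_le_sum; intro k _
            exact mul_le_mul_of_nonneg_left (hD i k) (mul_nonneg (hp0 i) (hm0 k))
        _ = 2 * (1 - dobrushin P u) * m * m := by
            have e : (∑ i, φp i) * (∑ k, φm k) * (2 * (1 - dobrushin P u))
                = ∑ i, ∑ k, φp i * φm k * (2 * (1 - dobrushin P u)) := by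
              rw [Finset.sum_mul_sum, Finset.sum_mul]
              exact Finset.sum_congr rfl fun i _ => by rw [Finset.sum_mul]
            rw [← e, hm2, ← hm]
            ring
    rw [htv]
    have hfinal : m * tvDist (push P u π) (push P u ν)
        ≤ m * ((1 - dobrushin P u) * (2 * m)) := by
      calc m * tvDist (push P u π) (push P u ν)
          ≤ 2 * (1 - dobrushin P u) * m * m := main
        _ = m * ((1 - dobrushin P u) * (2 * m)) := by ring
    exact le_of_mul_le_mul_left hfinal hmpos

end
end

section
/- One-step predictor stability contraction: let π, ν ∈ P(𝕏), Q ∈ 𝒬, η ∈ ℋ, and suppose that for every q ∈ ℳ, ν(Q⁻¹(q)) = 0 implies π(Q⁻¹(q)) = 0. Then Σ_{q ∈ ℳ : π(Q⁻¹(q)) > 0} π(Q⁻¹(q)) · ‖F(π,Q,η,q) − F(ν,Q,η,q)‖_TV ≤ 2 (1 − min_{u∈𝕌} δ(P,u)) ‖π − ν‖_TV. In particular, if min_{u∈𝕌} δ(P,u) ≥ 1/2, the expected total variation between the one-step predictor updates started from priors π and ν is bounded by ‖π − ν‖_TV. -/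
open Finset

noncomputable section

variable {X U M : Type}

/-- The minimal Dobrushin coefficient `min_{u∈𝕌} δ(P,u)`. -/
def minDobrushin [Fintype X] [Nonempty X] [Fintype U] [Nonempty U]
    (P : X → U → X → ℝ) : ℝ :=
  Finset.univ.inf' Finset.univ_nonempty (fun u : U => dobrushin P u)

/-! On the cell `Q⁻¹(q)` both updates push the priors conditioned on that cell through the same
kernel `P(·|·,η(Q,q))`. Writing a zero-mass signed vector as `f⁺ - f⁻` and coupling the two parts
row by row shows that such a kernel contracts it in total variation by `1 - δ(P,u)`. Conditioning
on the cell costs at most a factor two, `π(Q⁻¹q) ‖π|_q - ν|_q‖ ≤ 2 Σ_{x ∈ Q⁻¹q} |π x - ν x|`, and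
summing over the cells gives `2 (1 - min_u δ(P,u)) ‖π - ν‖`. -/

section Kernel

variable {ι κ : Type*} [Fintype ι]

theorem sum_abs_sub_eq_sum_add_sum_sub_two_mul_sum_min [Fintype κ] (a b : κ → ℝ) :
    ∑ j, |a j - b j| = ∑ j, a j + ∑ j, b j - 2 * ∑ j, min (a j) (b j) := by
  have h : ∀ j, |a j - b j| = a j + b j - 2 * min (a j) (b j) := fun j => by
    rw [abs_sub_comm, ← max_sub_min_eq_abs]
    linarith [min_add_max (a j) (b j)]
  simp only [h, sum_sub_distrib, sum_add_distrib, mul_sum]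

theorem sum_posPart_eq_sum_negPart {f : ι → ℝ} (hf : ∑ i, f i = 0) :
    ∑ i, (f i)⁺ = ∑ i, (f i)⁻ := by
  rw [← sub_eq_zero, ← sum_sub_distrib]
  simpa only [posPart_sub_negPart] using hf

theorem sum_posPart_mul_sum_mul_eq (K : ι → κ → ℝ) {f : ι → ℝ} (hf : ∑ i, f i = 0) (j : κ) :
    (∑ i, (f i)⁺) * ∑ i, f i * K i j = ∑ i, ∑ k, (f i)⁺ * (f k)⁻ * (K i j - K k j) := by
  have hA : ∑ i, ∑ k, (f i)⁺ * (f k)⁻ * K i j = (∑ i, (f i)⁺ * K i j) * ∑ k, (f k)⁻ := by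
    rw [sum_mul_sum]
    exact sum_congr rfl fun i _ => sum_congr rfl fun k _ => by ring
  have hB : ∑ i, ∑ k, (f i)⁺ * (f k)⁻ * K k j = (∑ i, (f i)⁺) * ∑ k, (f k)⁻ * K k j := by
    rw [sum_mul_sum]
    exact sum_congr rfl fun i _ => sum_congr rfl fun k _ => by ring
  have hsplit : ∑ i, f i * K i j = ∑ i, (f i)⁺ * K i j - ∑ i, (f i)⁻ * K i j := by
    rw [← sum_sub_distrib]
    exact sum_congr rfl fun i _ => by rw [← sub_mul, posPart_sub_negPart]
  simp only [mul_sub, sum_sub_distrib]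
  rw [hA, hB, hsplit, ← sum_posPart_eq_sum_negPart hf]
  ring

theorem two_mul_sum_abs_sum_mul_le_of_sum_eq_zero [Fintype κ] (K : ι → κ → ℝ) {c : ℝ}
    (hK : ∀ i k, ∑ j, |K i j - K k j| ≤ c) {f : ι → ℝ} (hf : ∑ i, f i = 0) :
    2 * ∑ j, |∑ i, f i * K i j| ≤ c * ∑ i, |f i| := by
  set s := ∑ i, (f i)⁺
  have hs : ∑ i, (f i)⁻ = s := (sum_posPart_eq_sum_negPart hf).symm
  have habs : ∑ i, |f i| = 2 * s := by
    simp only [← posPart_add_negPart, sum_add_distrib, hs]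
    ring
  have hweight : ∀ i k, 0 ≤ (f i)⁺ * (f k)⁻ := fun i k =>
    mul_nonneg (posPart_nonneg _) (negPart_nonneg _)
  have hs_nonneg : 0 ≤ s := sum_nonneg fun i _ => posPart_nonneg (f i)
  rcases hs_nonneg.eq_or_lt with hs0 | hs0
  · have hf0 : ∀ i, f i = 0 := by
      have := (sum_eq_zero_iff_of_nonneg fun i _ => abs_nonneg (f i)).1 (by rw [habs, ← hs0]; ring)
      simpa using this
    simp [hf0]
  have hpoint : ∀ j, s * |∑ i, f i * K i j| ≤ ∑ i, ∑ k, (f i)⁺ * (f k)⁻ * |K i j - K k j| := by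
    intro j
    calc s * |∑ i, f i * K i j| = |∑ i, ∑ k, (f i)⁺ * (f k)⁻ * (K i j - K k j)| := by
          rw [← sum_posPart_mul_sum_mul_eq K hf j, abs_mul, abs_of_pos hs0]
      _ ≤ ∑ i, ∑ k, |(f i)⁺ * (f k)⁻ * (K i j - K k j)| :=
          (abs_sum_le_sum_abs _ _).trans (sum_le_sum fun i _ => abs_sum_le_sum_abs _ _)
      _ = ∑ i, ∑ k, (f i)⁺ * (f k)⁻ * |K i j - K k j| := by
          simp only [abs_mul (_ * _), abs_of_nonneg (hweight _ _)]
  have hmain : s * ∑ j, |∑ i, f i * K i j| ≤ s * (c * s) :=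
    calc s * ∑ j, |∑ i, f i * K i j|
        ≤ ∑ j, ∑ i, ∑ k, (f i)⁺ * (f k)⁻ * |K i j - K k j| := by
          rw [mul_sum]
          exact sum_le_sum fun j _ => hpoint j
      _ = ∑ i, ∑ k, (f i)⁺ * (f k)⁻ * ∑ j, |K i j - K k j| := by
          simp only [mul_sum]
          rw [sum_comm]
          exact sum_congr rfl fun i _ => sum_comm
      _ ≤ ∑ i, ∑ k, (f i)⁺ * (f k)⁻ * c :=
          sum_le_sum fun i _ => sum_le_sum fun k _ =>
            mul_le_mul_of_nonneg_left (hK i k) (hweight i k)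
      _ = s * (c * s) := by
          simp only [← sum_mul, ← mul_sum, hs]
          ring
  rw [habs]
  linarith [le_of_mul_le_mul_left hmain hs0]

end Kernel

theorem sum_abs_sub_le_two_mul_one_sub_dobrushin [Fintype X] [Nonempty X]
    {P : X → U → X → ℝ} (hP : ∀ x u, ∑ j, P x u j = 1) (u : U) (i k : X) :
    ∑ j, |P i u j - P k u j| ≤ 2 * (1 - dobrushin P u) := by
  have hδ : dobrushin P u ≤ ∑ j, min (P i u j) (P k u j) := inf'_le _ (mem_univ (i, k))
  rw [sum_abs_sub_eq_sum_add_sum_sub_two_mul_sum_min, hP, hP]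
  linarith

theorem sum_abs_sum_mul_le_one_sub_dobrushin_mul [Fintype X] [Nonempty X]
    {P : X → U → X → ℝ} (hP : ∀ x u, ∑ j, P x u j = 1) (u : U) {f : X → ℝ}
    (hf : ∑ x, f x = 0) :
    ∑ j, |∑ x, f x * P x u j| ≤ (1 - dobrushin P u) * ∑ x, |f x| := by
  have := two_mul_sum_abs_sum_mul_le_of_sum_eq_zero (fun x => P x u)
    (sum_abs_sub_le_two_mul_one_sub_dobrushin hP u) hf
  linarith

theorem dobrushin_le_one [Fintype X] [Nonempty X] {P : X → U → X → ℝ}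
    (hP : ∀ x u, ∑ j, P x u j = 1) (u : U) : dobrushin P u ≤ 1 := by
  obtain ⟨x⟩ := ‹Nonempty X›
  calc dobrushin P u ≤ ∑ j, min (P x u j) (P x u j) := inf'_le _ (mem_univ (x, x))
    _ = 1 := by simp only [min_self, hP]

theorem minDobrushin_le_dobrushin [Fintype X] [Nonempty X] [Fintype U] [Nonempty U]
    (P : X → U → X → ℝ) (u : U) : minDobrushin P ≤ dobrushin P u :=
  inf'_le _ (mem_univ u)

theorem minDobrushin_le_one [Fintype X] [Nonempty X] [Fintype U] [Nonempty U]
    {P : X → U → X → ℝ} (hP : ∀ x u, ∑ j, P x u j = 1) : minDobrushin P ≤ 1 := by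
  obtain ⟨u⟩ := ‹Nonempty U›
  exact (minDobrushin_le_dobrushin P u).trans (dobrushin_le_one hP u)

theorem tvDist_nonneg [Fintype X] (π ν : X → ℝ) : 0 ≤ tvDist π ν :=
  sum_nonneg fun _ _ => abs_nonneg _

def condCell [Fintype X] [DecidableEq M] (π : X → ℝ) (Q : X → M) (q : M) : X → ℝ :=
  fun x => if Q x = q then π x / mass π Q q else 0

section Cell

variable [Fintype X] [DecidableEq M] {π ν : X → ℝ} {Q : X → M} {q : M}

theorem sum_condCell (h : mass π Q q ≠ 0) : ∑ x, condCell π Q q x = 1 := by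
  simp only [condCell]
  rw [← sum_filter, ← sum_div]
  exact div_self h

theorem Fupd_eq_sum_condCell_mul (P : X → U → X → ℝ) (η : (X → M) → M → U) (x' : X) :
    Fupd P π Q η q x' = ∑ x, condCell π Q q x * P x (η Q q) x' := by
  simp only [Fupd, condCell, ite_mul, zero_mul]
  rw [← sum_filter, mul_sum]
  exact sum_congr rfl fun x _ => by ring

theorem tvDist_Fupd_le [Nonempty X] {P : X → U → X → ℝ} (hP : ∀ x u, ∑ j, P x u j = 1)
    (η : (X → M) → M → U) (hπ : mass π Q q ≠ 0) (hν : mass ν Q q ≠ 0) :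
    tvDist (Fupd P π Q η q) (Fupd P ν Q η q)
      ≤ (1 - dobrushin P (η Q q)) * tvDist (condCell π Q q) (condCell ν Q q) := by
  have hf : ∑ x, (condCell π Q q x - condCell ν Q q x) = 0 := by
    rw [sum_sub_distrib, sum_condCell hπ, sum_condCell hν, sub_self]
  simpa only [tvDist, Fupd_eq_sum_condCell_mul, ← sum_sub_distrib, ← sub_mul] using
    sum_abs_sum_mul_le_one_sub_dobrushin_mul hP (η Q q) hf

theorem mass_mul_tvDist_condCell_le (hν : ∀ x, 0 ≤ ν x) (hνq : mass ν Q q ≠ 0) :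
    mass π Q q * tvDist (condCell π Q q) (condCell ν Q q)
      ≤ 2 * ∑ x ∈ univ.filter (fun x => Q x = q), |π x - ν x| := by
  set s := univ.filter (fun x => Q x = q)
  set mπ := mass π Q q with hmπ
  set mν := mass ν Q q with hmν
  rcases eq_or_ne mπ 0 with h0 | h0
  · rw [h0, zero_mul]
    exact mul_nonneg zero_le_two (sum_nonneg fun _ _ => abs_nonneg _)
  have hrescale : mπ * tvDist (condCell π Q q) (condCell ν Q q)
      ≤ ∑ x ∈ s, |π x - mπ / mν * ν x| :=
    calc mπ * tvDist (condCell π Q q) (condCell ν Q q)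
        ≤ |mπ| * tvDist (condCell π Q q) (condCell ν Q q) :=
          mul_le_mul_of_nonneg_right (le_abs_self _) (tvDist_nonneg _ _)
      _ = ∑ x ∈ s, |π x - mπ / mν * ν x| := by
          rw [tvDist, mul_sum, sum_filter]
          refine sum_congr rfl fun x _ => ?_
          simp only [condCell, ← hmπ, ← hmν]
          split_ifs
          · rw [← abs_mul]
            congr 1
            field_simp
          · simp
  have hmν : 0 ≤ mν := sum_nonneg fun x _ => hν x
  have hmass : |mν - mπ| ≤ ∑ x ∈ s, |π x - ν x| := by
    rw [show mν - mπ = ∑ x ∈ s, (ν x - π x) from (sum_sub_distrib _ _).symm]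
    exact (abs_sum_le_sum_abs _ _).trans_eq (sum_congr rfl fun x _ => abs_sub_comm _ _)
  have hscale : ∑ x ∈ s, |π x - mπ / mν * ν x| ≤ ∑ x ∈ s, |π x - ν x| + |mν - mπ| := by
    have hdefect : |mν - mπ| = ∑ x ∈ s, |1 - mπ / mν| * ν x := by
      rw [← mul_sum, show ∑ x ∈ s, ν x = mν from rfl, ← abs_of_nonneg hmν, ← abs_mul,
        abs_of_nonneg hmν, sub_mul, div_mul_cancel₀ _ hνq, one_mul]
    rw [hdefect, ← sum_add_distrib]
    refine sum_le_sum fun x _ => ?_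
    calc |π x - mπ / mν * ν x| = |(π x - ν x) + (1 - mπ / mν) * ν x| := by ring_nf
      _ ≤ |π x - ν x| + |1 - mπ / mν| * ν x := by
          rw [← abs_of_nonneg (hν x), ← abs_mul, abs_of_nonneg (hν x)]
          exact abs_add_le _ _
  linarith

end Cell

theorem mass_mul_tvDist_Fupd_le [Fintype X] [Nonempty X] [Fintype U] [Nonempty U]
    [DecidableEq M] {P : X → U → X → ℝ} (hP : ∀ x u, ∑ j, P x u j = 1) {π ν : X → ℝ}
    (hν : ∀ x, 0 ≤ ν x) {Q : X → M} (η : (X → M) → M → U) {q : M}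
    (hπq : 0 < mass π Q q) (hνq : mass ν Q q ≠ 0) :
    mass π Q q * tvDist (Fupd P π Q η q) (Fupd P ν Q η q)
      ≤ 2 * (1 - minDobrushin P) * ∑ x ∈ univ.filter (fun x => Q x = q), |π x - ν x| := by
  have hδ : 1 - dobrushin P (η Q q) ≤ 1 - minDobrushin P :=
    sub_le_sub_left (minDobrushin_le_dobrushin P _) 1
  have hδ_nonneg : 0 ≤ 1 - minDobrushin P := sub_nonneg.2 (minDobrushin_le_one hP)
  calc mass π Q q * tvDist (Fupd P π Q η q) (Fupd P ν Q η q)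
      ≤ mass π Q q * ((1 - dobrushin P (η Q q)) *
          tvDist (condCell π Q q) (condCell ν Q q)) :=
        mul_le_mul_of_nonneg_left (tvDist_Fupd_le hP η hπq.ne' hνq) hπq.le
    _ ≤ (1 - minDobrushin P) * (mass π Q q * tvDist (condCell π Q q) (condCell ν Q q)) := by
        rw [mul_left_comm]
        exact mul_le_mul_of_nonneg_right hδ (mul_nonneg hπq.le (tvDist_nonneg _ _))
    _ ≤ (1 - minDobrushin P) * (2 * ∑ x ∈ univ.filter (fun x => Q x = q), |π x - ν x|) :=
        mul_le_mul_of_nonneg_left (mass_mul_tvDist_condCell_le hν hνq) hδ_nonneg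
    _ = 2 * (1 - minDobrushin P) * ∑ x ∈ univ.filter (fun x => Q x = q), |π x - ν x| := by
        ring

theorem one_step_predictor_stability_general
    [Fintype X] [Fintype U] [Fintype M]
    [Nonempty X] [Nonempty U] [DecidableEq M]
    (P : X → U → X → ℝ) (hP : ∀ x u, IsPmf (P x u))
    (π ν : X → ℝ) (hν : IsPmf ν)
    (Q : X → M) (η : (X → M) → M → U)
    (habs : ∀ q : M, mass ν Q q = 0 → mass π Q q = 0) :
    (∑ q ∈ Finset.univ.filter (fun q => 0 < mass π Q q),
        mass π Q q * tvDist (Fupd P π Q η q) (Fupd P ν Q η q)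
      ≤ 2 * (1 - minDobrushin P) * tvDist π ν)
    ∧ ((1 : ℝ) / 2 ≤ minDobrushin P →
        ∑ q ∈ Finset.univ.filter (fun q => 0 < mass π Q q),
            mass π Q q * tvDist (Fupd P π Q η q) (Fupd P ν Q η q)
          ≤ tvDist π ν) := by
  have hPsum : ∀ x u, ∑ j, P x u j = 1 := fun x u => (hP x u).2
  have hδ : 0 ≤ 1 - minDobrushin P := sub_nonneg.2 (minDobrushin_le_one hPsum)
  have hcontract : ∑ q ∈ univ.filter (fun q => 0 < mass π Q q),
      mass π Q q * tvDist (Fupd P π Q η q) (Fupd P ν Q η q)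
        ≤ 2 * (1 - minDobrushin P) * tvDist π ν :=
    calc _ ≤ ∑ q ∈ univ.filter (fun q => 0 < mass π Q q),
            2 * (1 - minDobrushin P) * ∑ x ∈ univ.filter (fun x => Q x = q), |π x - ν x| :=
          sum_le_sum fun q hq => have hπq := (mem_filter.1 hq).2
            mass_mul_tvDist_Fupd_le hPsum hν.1 η hπq fun h => hπq.ne' (habs q h)
      _ ≤ ∑ q, 2 * (1 - minDobrushin P) * ∑ x ∈ univ.filter (fun x => Q x = q), |π x - ν x| :=
          sum_le_sum_of_subset_of_nonneg (filter_subset _ _) fun q _ _ =>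
            mul_nonneg (mul_nonneg zero_le_two hδ) (sum_nonneg fun _ _ => abs_nonneg _)
      _ = 2 * (1 - minDobrushin P) * tvDist π ν := by
          rw [← mul_sum, sum_fiberwise]
          rfl
  exact ⟨hcontract, fun hhalf =>
    hcontract.trans (mul_le_of_le_one_left (tvDist_nonneg π ν) (by linarith))⟩

/-- One-step predictor stability contraction: let `π, ν ∈ P(𝕏)`,
`Q ∈ 𝒬`, `η ∈ ℋ`, and suppose that for every `q ∈ ℳ`, `ν(Q⁻¹(q)) = 0` implies
`π(Q⁻¹(q)) = 0`. Then
`Σ_{q : π(Q⁻¹(q)) > 0} π(Q⁻¹(q)) · ‖F(π,Q,η,q) − F(ν,Q,η,q)‖_TV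
  ≤ 2 (1 − min_{u∈𝕌} δ(P,u)) ‖π − ν‖_TV`.
In particular, if `min_{u∈𝕌} δ(P,u) ≥ 1/2`, the expected total variation between the
one-step predictor updates started from priors `π` and `ν` is bounded by `‖π − ν‖_TV`. -/
theorem one_step_predictor_stability
    [Fintype X] [Fintype U] [Fintype M]
    [Nonempty X] [Nonempty U] [Nonempty M] [DecidableEq X] [DecidableEq M]
    (P : X → U → X → ℝ) (hP : ∀ x u, IsPmf (P x u))
    (π ν : X → ℝ) (hπ : IsPmf π) (hν : IsPmf ν)
    (Q : X → M) (η : (X → M) → M → U)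
    (habs : ∀ q : M, mass ν Q q = 0 → mass π Q q = 0) :
    (∑ q ∈ Finset.univ.filter (fun q => 0 < mass π Q q),
        mass π Q q * tvDist (Fupd P π Q η q) (Fupd P ν Q η q)
      ≤ 2 * (1 - minDobrushin P) * tvDist π ν)
    ∧ ((1 : ℝ) / 2 ≤ minDobrushin P →
        ∑ q ∈ Finset.univ.filter (fun q => 0 < mass π Q q),
            mass π Q q * tvDist (Fupd P π Q η q) (Fupd P ν Q η q)
          ≤ tvDist π ν) :=
  one_step_predictor_stability_general P hP π ν hν Q η habs

end
end
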